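/- arXiv:2207.04079 — 6 statements merged into one kernel-verified Lean document; each statement's English description precedes it below -/
import Mathlib

section
/- Fix positive constants p∞, σ, Rg, T∞ and for M > 0 let R*[M] denote the unique positive root of p∞·R³ + 2σ·R² − 3·Rg·T∞·M/(4π) = 0, and ρ*[M] := 3M/(4π·R*[M]³). Let R₀ > 0 and let ρ₀ be a bounded measurable function on the ball B_{R₀} ⊂ ℝ³ with M₀ := ∫_{B_{R₀}} ρ₀ dx > 0. Then for every r > 0 there exists a constant C > 0, depending only on ρ₀, R₀, r and the fixed constants, such that for every M* > 0 with R*[M*] ≥ r one has |R*[M₀] − R*[M*]| + |ρ*[M₀] − ρ*[M*]| ≤ C·( |R₀ − R*[M*]| + ‖ρ₀ − ρ*[M*]‖_{L∞(B_{R₀})} ). -/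
open Real MeasureTheory

set_option maxHeartbeats 1000000

/-- The open ball of radius `R` centered at the origin in `ℝ³`. -/
noncomputable def ball3 (R : ℝ) : Set (EuclideanSpace ℝ (Fin 3)) :=
  Metric.ball (0 : EuclideanSpace ℝ (Fin 3)) R

theorem equilibrium_continuity_in_data (pinf σ Rg Tinf : ℝ)
    (hp : 0 < pinf) (hσ : 0 < σ) (hRg : 0 < Rg) (hT : 0 < Tinf)
    (Rstar : ℝ → ℝ)
    (hRstar : ∀ M : ℝ, 0 < M → 0 < Rstar M ∧
      pinf * Rstar M ^ 3 + 2 * σ * Rstar M ^ 2 = 3 * Rg * Tinf * M / (4 * π))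
    (R₀ : ℝ) (hR₀ : 0 < R₀)
    (ρ₀ : EuclideanSpace ℝ (Fin 3) → ℝ) (hmeas : Measurable ρ₀)
    (hbdd : ∃ C : ℝ, ∀ x ∈ ball3 R₀, |ρ₀ x| ≤ C)
    (hM₀ : 0 < ∫ x in ball3 R₀, ρ₀ x) :
    ∀ r : ℝ, 0 < r → ∃ C : ℝ, 0 < C ∧
      ∀ Ms : ℝ, 0 < Ms → r ≤ Rstar Ms →
        |Rstar (∫ x in ball3 R₀, ρ₀ x) - Rstar Ms|
          + |3 * (∫ x in ball3 R₀, ρ₀ x) / (4 * π * Rstar (∫ x in ball3 R₀, ρ₀ x) ^ 3)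
              - 3 * Ms / (4 * π * Rstar Ms ^ 3)|
        ≤ C * (|R₀ - Rstar Ms|
            + (eLpNorm (fun x => ρ₀ x - 3 * Ms / (4 * π * Rstar Ms ^ 3)) ⊤
                (volume.restrict (ball3 R₀))).toReal) := by
  intro r hr
  have hπ : 0 < π := Real.pi_pos
  obtain ⟨Cb, hCb⟩ := hbdd
  set M₀ := ∫ x in ball3 R₀, ρ₀ x with hM₀def
  obtain ⟨hA, eqA⟩ := hRstar M₀ hM₀
  set A := Rstar M₀ with hAdef
  -- measurability / finiteness facts about the ball
  have hmb : MeasurableSet (ball3 R₀) := by unfold ball3; exact measurableSet_ball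
  have hlt : volume (ball3 R₀) < ⊤ := by unfold ball3; exact measure_ball_lt_top
  -- volume of the ball
  have hΓ : Real.Gamma ((3:ℝ)/2 + 1) = 3/4 * Real.sqrt π := by
    rw [Real.Gamma_add_one (by norm_num)]
    rw [show (3:ℝ)/2 = 1/2 + 1 by norm_num, Real.Gamma_add_one (by norm_num),
      Real.Gamma_one_half_eq]
    ring
  have hV : (volume (ball3 R₀)).toReal = 4/3 * π * R₀^3 := by
    unfold ball3
    rw [EuclideanSpace.volume_ball]
    simp only [Fintype.card_fin]
    rw [show ((3:ℕ):ℝ)/2 + 1 = (3:ℝ)/2 + 1 by norm_num, hΓ]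
    rw [← ENNReal.ofReal_pow hR₀.le, ← ENNReal.ofReal_mul (by positivity)]
    rw [ENNReal.toReal_ofReal (by positivity)]
    have hs : Real.sqrt π ^ 3 = π * Real.sqrt π := by
      rw [pow_succ, Real.sq_sqrt hπ.le]
    rw [hs]
    have hne : Real.sqrt π ≠ 0 := by positivity
    field_simp
  set V : ℝ := 4/3 * π * R₀^3 with hVdef
  have hVpos : 0 < V := by positivity
  have h4π : (4:ℝ) * π ≠ 0 := by positivity
  have hkA : 3 * Rg * Tinf * M₀ = (pinf * A ^ 3 + 2 * σ * A ^ 2) * (4 * π) :=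
    (div_eq_iff h4π).mp eqA.symm
  -- constants
  set ρmax : ℝ := (pinf + 2 * σ / r) / (Rg * Tinf) with hρmaxdef
  have hρmaxpos : 0 < ρmax := by positivity
  set K : ℝ := 2 * max A R₀ + 1 with hKdef
  have hKpos : 0 < K := by
    have := le_max_left A R₀; rw [hKdef]; linarith
  have hR₀K : R₀ ≤ K := by
    have := le_max_right A R₀; rw [hKdef]; linarith
  have hAK : A ≤ K := by
    have := le_max_left A R₀; rw [hKdef]; linarith
  set c2 : ℝ := 1 + 2 * σ / (Rg * Tinf * A * r) with hc2def
  have hc2pos : (0:ℝ) < c2 := by positivity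
  set q : ℝ := 3 * Rg * Tinf / (2 * σ * r * (4 * π)) with hqdef
  have hqpos : 0 < q := by positivity
  set c3 : ℝ := q * (V + 4 * π * ρmax * K ^ 2) with hc3def
  have hc3pos : 0 < c3 := by positivity
  clear_value M₀ A V ρmax K c2 q c3
  refine ⟨c2 * (c3 + 2) + 1, by positivity, ?_⟩
  intro Ms hMs hrB'
  obtain ⟨hB, eqB⟩ := hRstar Ms hMs
  set B := Rstar Ms with hBdef
  have hrB : r ≤ B := hrB'
  set ρs : ℝ := 3 * Ms / (4 * π * B ^ 3) with hρsdef
  have hρspos : 0 < ρs := by positivity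
  set N : ℝ := (eLpNorm (fun x => ρ₀ x - ρs) ⊤ (volume.restrict (ball3 R₀))).toReal
    with hNdef
  have hN0 : 0 ≤ N := ENNReal.toReal_nonneg
  set d : ℝ := |R₀ - B| with hddef
  have hd0 : 0 ≤ d := abs_nonneg _
  have hkB : 3 * Rg * Tinf * Ms = (pinf * B ^ 3 + 2 * σ * B ^ 2) * (4 * π) :=
    (div_eq_iff h4π).mp eqB.symm
  set ρA : ℝ := 3 * M₀ / (4 * π * A ^ 3) with hρAdef
  clear_value B ρs N d ρA
  -- density identities
  have hidA : ρA * (Rg * Tinf * A) = pinf * A + 2 * σ := by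
    rw [hρAdef, div_mul_eq_mul_div, div_eq_iff (by positivity : (4:ℝ)*π*A^3 ≠ 0)]
    linear_combination A * hkA
  have hidB : ρs * (Rg * Tinf * B) = pinf * B + 2 * σ := by
    rw [hρsdef, div_mul_eq_mul_div, div_eq_iff (by positivity : (4:ℝ)*π*B^3 ≠ 0)]
    linear_combination B * hkB
  -- Estimate 2 : |ρA - ρs| ≤ (2σ/(Rg Tinf A r)) |A - B|
  have E2 : |ρA - ρs| ≤ 2 * σ / (Rg * Tinf * A * r) * |A - B| := by
    have h1 : ρA = (pinf * A + 2 * σ) / (Rg * Tinf * A) := by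
      rw [eq_div_iff (by positivity : Rg * Tinf * A ≠ 0)]; exact hidA
    have h2 : ρs = (pinf * B + 2 * σ) / (Rg * Tinf * B) := by
      rw [eq_div_iff (by positivity : Rg * Tinf * B ≠ 0)]; exact hidB
    have hident : ρA - ρs = 2 * σ * (B - A) / (Rg * Tinf * A * B) := by
      rw [h1, h2]
      field_simp
      ring
    have habs : |ρA - ρs| = 2 * σ * |A - B| / (Rg * Tinf * A * B) := by
      rw [hident, abs_div, abs_of_pos (by positivity : (0:ℝ) < Rg * Tinf * A * B),
        show (2:ℝ) * σ * (B - A) = (2 * σ) * (B - A) by ring, abs_mul,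
        abs_of_pos (by positivity : (0:ℝ) < 2 * σ), abs_sub_comm B A]
    rw [habs]
    have hstep : 2 * σ * |A - B| / (Rg * Tinf * A * B)
        ≤ 2 * σ * |A - B| / (Rg * Tinf * A * r) := by
      gcongr
    refine hstep.trans (le_of_eq ?_)
    field_simp
  -- Estimate 1
  set g : ℝ := pinf * (A ^ 2 + A * B + B ^ 2) + 2 * σ * (A + B) with hgdef
  have hg : 2 * σ * r ≤ g := by
    have hsum : (0:ℝ) ≤ A ^ 2 + A * B + B ^ 2 := by positivity
    have h1 : (0:ℝ) ≤ pinf * (A ^ 2 + A * B + B ^ 2) := mul_nonneg hp.le hsum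
    have h2 : (0:ℝ) ≤ σ * (A + B - r) := mul_nonneg hσ.le (by linarith)
    rw [hgdef]; linarith
  have hgpos : 0 < g := lt_of_lt_of_le (by positivity) hg
  clear_value g
  have key : (A - B) * g * (4 * π) = 3 * Rg * Tinf * (M₀ - Ms) := by
    rw [hgdef]; linear_combination hkB - hkA
  have hE1 : |A - B| * (2 * σ * r) * (4 * π) ≤ 3 * Rg * Tinf * |M₀ - Ms| := by
    have h2 : |A - B| * (2 * σ * r) * (4 * π) ≤ |A - B| * g * (4 * π) := by
      have h := mul_le_mul_of_nonneg_left hg (abs_nonneg (A - B))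
      exact mul_le_mul_of_nonneg_right h (by positivity)
    have h3 : |A - B| * g * (4 * π) = 3 * Rg * Tinf * |M₀ - Ms| := by
      have : |(A - B) * g * (4 * π)| = |A - B| * g * (4 * π) := by
        rw [abs_mul, abs_mul, abs_of_pos hgpos, abs_of_pos (show (0:ℝ) < 4 * π by positivity)]
      rw [← this, key, abs_mul, abs_of_pos (show (0:ℝ) < 3 * Rg * Tinf by positivity)]
    linarith
  -- main bound on |A - B|
  have step2 : |A - B| ≤ (c3 + 2) * (d + N) := by
    rcases le_or_gt B K with hBK | hKB
    · -- mass comparison in the small-radius case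
      have hae : ∀ᵐ x ∂(volume.restrict (ball3 R₀)), ‖ρ₀ x - ρs‖ ≤ Cb + |ρs| := by
        filter_upwards [ae_restrict_mem hmb] with x hx
        have h1 : |ρ₀ x - ρs| ≤ |ρ₀ x| + |ρs| := by
          have := abs_add_le (ρ₀ x) (-ρs)
          simpa [sub_eq_add_neg] using this
        rw [Real.norm_eq_abs]
        linarith [hCb x hx]
      have hfinESS : eLpNormEssSup (fun x => ρ₀ x - ρs) (volume.restrict (ball3 R₀)) ≠ ⊤ :=
        ((eLpNormEssSup_le_of_ae_bound hae).trans_lt ENNReal.ofReal_lt_top).ne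
      have hNae : ∀ᵐ x ∂(volume.restrict (ball3 R₀)), ‖ρ₀ x - ρs‖ ≤ N := by
        filter_upwards [ae_le_eLpNormEssSup (f := fun x => ρ₀ x - ρs)
          (μ := volume.restrict (ball3 R₀))] with x hx
        have h := ENNReal.toReal_mono hfinESS hx
        rw [hNdef, eLpNorm_exponent_top]
        simpa using h
      haveI : IsFiniteMeasure (volume.restrict (ball3 R₀)) :=
        ⟨by rw [Measure.restrict_apply_univ]; exact hlt⟩
      have hint : Integrable ρ₀ (volume.restrict (ball3 R₀)) := by
        refine Integrable.mono' (integrable_const Cb) hmeas.aestronglyMeasurable ?_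
        filter_upwards [ae_restrict_mem hmb] with x hx
        simpa [Real.norm_eq_abs] using hCb x hx
      have hIeq : M₀ - V * ρs = ∫ x in ball3 R₀, (ρ₀ x - ρs) := by
        rw [integral_sub hint (integrable_const _), setIntegral_const, smul_eq_mul, measureReal_def, hV, hM₀def]
      have hIb : |M₀ - V * ρs| ≤ N * V := by
        rw [hIeq, ← Real.norm_eq_abs]
        have h := norm_setIntegral_le_of_norm_le_const_ae (μ := volume) (s := ball3 R₀)
          (f := fun x => ρ₀ x - ρs) (C := N) hlt hNae
        rwa [measureReal_def, hV] at h
      have hMsρ : ρs * (4/3 * π * B ^ 3) = Ms := by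
        rw [hρsdef]; field_simp
      have hρsmax : ρs ≤ ρmax := by
        have h9 : ρs * (Rg * Tinf) * B = (pinf + 2 * σ / B) * B := by
          rw [show (pinf + 2 * σ / B) * B = pinf * B + 2 * σ from by field_simp]
          linear_combination hidB
        have h9' : ρs * (Rg * Tinf) = pinf + 2 * σ / B := mul_right_cancel₀ hB.ne' h9
        rw [hρmaxdef, le_div_iff₀ (by positivity : (0:ℝ) < Rg * Tinf), h9']
        gcongr
      have hcube : |R₀ ^ 3 - B ^ 3| ≤ 3 * K ^ 2 * d := by
        have hfac : R₀ ^ 3 - B ^ 3 = (R₀ - B) * (R₀ ^ 2 + R₀ * B + B ^ 2) := by ring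
        rw [hfac, abs_mul, abs_of_pos (by positivity : (0:ℝ) < R₀ ^ 2 + R₀ * B + B ^ 2), hddef]
        have e1 : R₀ ^ 2 ≤ K ^ 2 := pow_le_pow_left₀ hR₀.le hR₀K 2
        have e2 : B ^ 2 ≤ K ^ 2 := pow_le_pow_left₀ hB.le hBK 2
        have e3 : R₀ * B ≤ K * K := mul_le_mul hR₀K hBK hB.le hKpos.le
        have e4 : K ^ 2 = K * K := pow_two K
        have hfb : R₀ ^ 2 + R₀ * B + B ^ 2 ≤ 3 * K ^ 2 := by linarith [e1, e2, e3, e4]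
        calc |R₀ - B| * (R₀ ^ 2 + R₀ * B + B ^ 2)
            ≤ |R₀ - B| * (3 * K ^ 2) := mul_le_mul_of_nonneg_left hfb (abs_nonneg _)
          _ = 3 * K ^ 2 * |R₀ - B| := by ring
      have hM : |M₀ - Ms| ≤ V * N + 4 * π * ρmax * K ^ 2 * d := by
        have hsplit : M₀ - Ms = (M₀ - V * ρs) + ρs * (V - 4/3 * π * B ^ 3) := by
          rw [← hMsρ]; ring
        have habs : |ρs * (V - 4/3 * π * B ^ 3)| = ρs * (4/3 * π * |R₀ ^ 3 - B ^ 3|) := by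
          rw [show V - 4/3 * π * B ^ 3 = 4/3 * π * (R₀ ^ 3 - B ^ 3) from by rw [hVdef]; ring,
            abs_mul, abs_mul, abs_of_pos hρspos,
            abs_of_pos (show (0:ℝ) < 4/3 * π by positivity)]
        calc |M₀ - Ms| ≤ |M₀ - V * ρs| + |ρs * (V - 4/3 * π * B ^ 3)| := by
              rw [hsplit]; exact abs_add_le _ _
          _ ≤ N * V + ρs * (4/3 * π * |R₀ ^ 3 - B ^ 3|) := by
              rw [habs]; exact add_le_add hIb le_rfl
          _ ≤ N * V + ρmax * (4/3 * π * (3 * K ^ 2 * d)) := by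
              gcongr
          _ = V * N + 4 * π * ρmax * K ^ 2 * d := by ring
      -- combine
      have h1 : |A - B| ≤ q * (V * N + 4 * π * ρmax * K ^ 2 * d) := by
        rw [hqdef, div_mul_eq_mul_div, le_div_iff₀ (by positivity)]
        calc |A - B| * (2 * σ * r * (4 * π)) = |A - B| * (2 * σ * r) * (4 * π) := by ring
          _ ≤ 3 * Rg * Tinf * |M₀ - Ms| := hE1
          _ ≤ 3 * Rg * Tinf * (V * N + 4 * π * ρmax * K ^ 2 * d) := by
              have := mul_le_mul_of_nonneg_left hM (by positivity : (0:ℝ) ≤ 3 * Rg * Tinf)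
              linarith
          _ = 3 * Rg * Tinf * (V * N + 4 * π * ρmax * K ^ 2 * d) := rfl
      have h2 : q * (V * N + 4 * π * ρmax * K ^ 2 * d) ≤ c3 * (d + N) := by
        have hin : V * N + 4 * π * ρmax * K ^ 2 * d
            ≤ (V + 4 * π * ρmax * K ^ 2) * (d + N) := by
          have ee : (V + 4 * π * ρmax * K ^ 2) * (d + N)
              = V * N + 4 * π * ρmax * K ^ 2 * d + (V * d + 4 * π * ρmax * K ^ 2 * N) := by
            ring
          have q1 : (0:ℝ) ≤ V * d := mul_nonneg hVpos.le hd0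
          have q2 : (0:ℝ) ≤ 4 * π * ρmax * K ^ 2 * N :=
            mul_nonneg (by positivity : (0:ℝ) ≤ 4 * π * ρmax * K ^ 2) hN0
          linarith
        calc q * (V * N + 4 * π * ρmax * K ^ 2 * d)
            ≤ q * ((V + 4 * π * ρmax * K ^ 2) * (d + N)) :=
              mul_le_mul_of_nonneg_left hin hqpos.le
          _ = c3 * (d + N) := by rw [hc3def]; ring
      have e : (c3 + 2) * (d + N) = c3 * (d + N) + 2 * (d + N) := by ring
      have := h1.trans h2
      have h2dN : (0:ℝ) ≤ d + N := add_nonneg hd0 hN0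
      linarith
    · -- big-radius case : d dominates
      have hAB : A < B := lt_of_le_of_lt hAK hKB
      have hRB : R₀ < B := lt_of_le_of_lt hR₀K hKB
      have h1 : |A - B| ≤ 2 * d := by
        rw [hddef, abs_sub_comm A B, abs_of_pos (sub_pos.2 hAB), abs_sub_comm R₀ B,
          abs_of_pos (sub_pos.2 hRB)]
        have h2R : 2 * R₀ ≤ K - 1 := by rw [hKdef]; have := le_max_right A R₀; linarith
        linarith
      have e : (c3 + 2) * (d + N) = c3 * (d + N) + 2 * d + 2 * N := by ring
      have := mul_nonneg hc3pos.le (add_nonneg hd0 hN0)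
      linarith
  -- final assembly
  have step1 : |A - B| + |ρA - ρs| ≤ c2 * |A - B| := by
    have e : c2 * |A - B| = |A - B| + 2 * σ / (Rg * Tinf * A * r) * |A - B| := by
      rw [hc2def]; ring
    linarith [E2]
  calc |A - B| + |ρA - ρs| ≤ c2 * |A - B| := step1
    _ ≤ c2 * ((c3 + 2) * (d + N)) := by
        exact mul_le_mul_of_nonneg_left step2 hc2pos.le
    _ ≤ (c2 * (c3 + 2) + 1) * (d + N) := by
        have e : (c2 * (c3 + 2) + 1) * (d + N) = c2 * ((c3 + 2) * (d + N)) + (d + N) := by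
          ring
        linarith [add_nonneg hd0 hN0]
end

section
/- Let Ω ⊆ ℝ³ be a nonempty open connected set and let v : Ω → ℝ³ be twice continuously differentiable with vanishing deformation tensor, i.e. for every x ∈ Ω the derivative Dv(x) satisfies ⟨Dv(x)u, w⟩ + ⟨u, Dv(x)w⟩ = 0 for all u, w ∈ ℝ³. Then there exist vectors ω, b ∈ ℝ³ such that v(x) = ω × x + b for all x ∈ Ω, where × denotes the cross product. In particular, if moreover Ω contains the complement of a ball and v(x) → 0 as |x| → ∞, then v ≡ 0 on Ω. -/
open RealInnerProductSpace

/-- The cross product on `ℝ³` (as `EuclideanSpace ℝ (Fin 3)`). -/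
noncomputable def cross3 (a b : EuclideanSpace ℝ (Fin 3)) : EuclideanSpace ℝ (Fin 3) :=
  WithLp.toLp 2 ![a 1 * b 2 - a 2 * b 1, a 2 * b 0 - a 0 * b 2, a 0 * b 1 - a 1 * b 0]

local notation "E3" => EuclideanSpace ℝ (Fin 3)

/-- A differentiable function with vanishing derivative on an open preconnected set
is constant there. -/
lemma aux_eq_const_on {X G : Type*} [NormedAddCommGroup X] [NormedSpace ℝ X]
    [NormedAddCommGroup G] [NormedSpace ℝ G] {Ω : Set X} (hop : IsOpen Ω)
    (hconn : IsPreconnected Ω) {f : X → G}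
    (hdiff : ∀ x ∈ Ω, DifferentiableAt ℝ f x)
    (hzero : ∀ x ∈ Ω, fderiv ℝ f x = 0) {a : X} (ha : a ∈ Ω) :
    ∀ x ∈ Ω, f x = f a := by
  have loc : ∀ x ∈ Ω, ∀ᶠ y in nhds x, f y = f x := by
    intro x hx
    obtain ⟨ε, εpos, hball⟩ := Metric.isOpen_iff.1 hop x hx
    filter_upwards [Metric.ball_mem_nhds x εpos] with y hy
    refine (convex_ball x ε).is_const_of_fderivWithin_eq_zero
      (fun z hz => (hdiff z (hball hz)).differentiableWithinAt) (fun z hz => ?_) hy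
      (Metric.mem_ball_self εpos)
    rw [fderivWithin_of_isOpen Metric.isOpen_ball hz]
    exact hzero z (hball hz)
  intro x hx
  by_contra hne
  set u : Set X := {y | y ∈ Ω ∧ f y = f a} with hu
  set w : Set X := {y | y ∈ Ω ∧ f y ≠ f a} with hw
  have hou : IsOpen u := by
    rw [isOpen_iff_mem_nhds]
    rintro y ⟨hyΩ, hy⟩
    filter_upwards [loc y hyΩ, hop.mem_nhds hyΩ] with z hz hzΩ
    exact ⟨hzΩ, hz.trans hy⟩
  have how : IsOpen w := by
    rw [isOpen_iff_mem_nhds]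
    rintro y ⟨hyΩ, hy⟩
    filter_upwards [loc y hyΩ, hop.mem_nhds hyΩ] with z hz hzΩ
    exact ⟨hzΩ, hz ▸ hy⟩
  obtain ⟨z, hzΩ, ⟨_, h1⟩, ⟨_, h2⟩⟩ :=
    hconn u w hou how (fun z hz => by by_cases h : f z = f a
                                      exacts [Or.inl ⟨hz, h⟩, Or.inr ⟨hz, h⟩])
      ⟨a, ha, ⟨ha, rfl⟩⟩ ⟨x, hx, ⟨hx, hne⟩⟩
  exact h2 h1

/-- A skew-symmetric continuous linear map on `ℝ³` is given by a cross product. -/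
lemma aux_skew_cross (A : E3 →L[ℝ] E3)
    (hA : ∀ u w : E3, ⟪A u, w⟫ + ⟪u, A w⟫ = 0) :
    ∃ ω : E3, ∀ x, A x = cross3 ω x := by
  set e : Fin 3 → E3 := fun i => EuclideanSpace.single i 1 with he
  have hcomp : ∀ (y : E3) (i : Fin 3), ⟪y, e i⟫ = y i := by
    intro y i
    simp [he, EuclideanSpace.inner_single_right]
  have hskew : ∀ i j : Fin 3, A (e j) i = - A (e i) j := by
    intro i j
    have := hA (e j) (e i)
    rw [hcomp, real_inner_comm, hcomp] at this
    linarith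
  refine ⟨WithLp.toLp 2 ![A (e 1) 2, A (e 2) 0, A (e 0) 1], fun x => ?_⟩
  have hx : x = x 0 • e 0 + x 1 • e 1 + x 2 • e 2 := by
    refine PiLp.ext fun i => ?_
    fin_cases i <;>
      simp [he, PiLp.add_apply, PiLp.smul_apply, EuclideanSpace.single_apply]
  have hAx : A x = x 0 • A (e 0) + x 1 • A (e 1) + x 2 • A (e 2) := by
    conv_lhs => rw [hx]
    simp [map_add, map_smul]
  refine PiLp.ext fun i => ?_
  have h00 := hskew 0 0
  have h11 := hskew 1 1
  have h22 := hskew 2 2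
  have h01 := hskew 0 1
  have h02 := hskew 0 2
  have h12 := hskew 1 2
  fin_cases i
  · simp only [hAx, cross3, PiLp.toLp_apply, PiLp.add_apply, PiLp.smul_apply, smul_eq_mul,
      Fin.zero_eta, Fin.mk_one, Matrix.cons_val_zero, Matrix.cons_val_one,
      Matrix.cons_val_two, Matrix.tail_cons, Matrix.head_cons]
    linear_combination (x 0 / 2) * h00 + x 1 * h01
  · simp only [hAx, cross3, PiLp.toLp_apply, PiLp.add_apply, PiLp.smul_apply, smul_eq_mul,
      Fin.zero_eta, Fin.mk_one, Matrix.cons_val_zero, Matrix.cons_val_one,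
      Matrix.cons_val_two, Matrix.tail_cons, Matrix.head_cons]
    linear_combination (x 1 / 2) * h11 + x 2 * h12
  · simp only [hAx, cross3, PiLp.toLp_apply, PiLp.add_apply, PiLp.smul_apply, smul_eq_mul,
      Fin.zero_eta, Fin.mk_one, Fin.reduceFinMk,
      Matrix.cons_val_zero, Matrix.cons_val_one,
      Matrix.cons_val_two, Matrix.tail_cons, Matrix.head_cons]
    linear_combination x 0 * h02 + (x 2 / 2) * h22

/-- The cross product is linear in its second argument (scalar multiplication). -/
lemma aux_cross3_smul (a : E3) (t : ℝ) (x : E3) :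
    cross3 a (t • x) = t • cross3 a x := by
  refine PiLp.ext fun i => ?_
  fin_cases i <;>
    simp [cross3, PiLp.smul_apply, smul_eq_mul] <;> ring

theorem vanishing_deformation_tensor_rigid_motion
    (Ω : Set (EuclideanSpace ℝ (Fin 3))) (hne : Ω.Nonempty)
    (hop : IsOpen Ω) (hconn : IsConnected Ω)
    (v : EuclideanSpace ℝ (Fin 3) → EuclideanSpace ℝ (Fin 3))
    (hv : ContDiffOn ℝ 2 v Ω)
    (hdef : ∀ x ∈ Ω, ∀ u w : EuclideanSpace ℝ (Fin 3),
      ⟪fderiv ℝ v x u, w⟫ + ⟪u, fderiv ℝ v x w⟫ = 0) :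
    (∃ ω b : EuclideanSpace ℝ (Fin 3), ∀ x ∈ Ω, v x = cross3 ω x + b) ∧
    ((∃ r : ℝ, ∀ x : EuclideanSpace ℝ (Fin 3), r < ‖x‖ → x ∈ Ω) →
      Filter.Tendsto v (Filter.comap (fun x => ‖x‖) Filter.atTop) (nhds 0) →
      ∀ x ∈ Ω, v x = 0) := by
  have hvdiff : ∀ x ∈ Ω, DifferentiableAt ℝ v x := fun x hx =>
    (hv.contDiffAt (hop.mem_nhds hx)).differentiableAt two_ne_zero
  have hF1 : ContDiffOn ℝ 1 (fderiv ℝ v) Ω := hv.fderiv_of_isOpen hop (by norm_num)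
  have hFdiff : ∀ x ∈ Ω, DifferentiableAt ℝ (fderiv ℝ v) x := fun x hx =>
    (hF1.contDiffAt (hop.mem_nhds hx)).differentiableAt one_ne_zero
  -- the second derivative vanishes on Ω
  have hFd0 : ∀ x ∈ Ω, fderiv ℝ (fderiv ℝ v) x = 0 := by
    intro x hx
    set G := fderiv ℝ (fderiv ℝ v) x with hG
    have hsymm : ∀ z u, G z u = G u z := by
      intro z u
      refine second_derivative_symmetric_of_eventually (f := v) (f' := fderiv ℝ v) (x := x)
        ?_ ?_ z u
      · filter_upwards [hop.mem_nhds hx] with y hy using (hvdiff y hy).hasFDerivAt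
      · exact (hFdiff x hx).hasFDerivAt
    have hskew : ∀ z u w, ⟪G z u, w⟫ + ⟪u, G z w⟫ = 0 := by
      intro z u w
      set Φ : (E3 →L[ℝ] E3) →L[ℝ] ℝ :=
        ((innerSL ℝ w).comp (ContinuousLinearMap.apply ℝ E3 u)) +
        ((innerSL ℝ u).comp (ContinuousLinearMap.apply ℝ E3 w)) with hΦ
      have hΦval : ∀ L : E3 →L[ℝ] E3, Φ L = ⟪L u, w⟫ + ⟪u, L w⟫ := by
        intro L
        simp [hΦ, ContinuousLinearMap.apply, real_inner_comm w]
      have h1 : HasFDerivAt (fun y => Φ (fderiv ℝ v y)) (Φ.comp G) x :=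
        Φ.hasFDerivAt.comp x (hFdiff x hx).hasFDerivAt
      have h2 : (fun y => Φ (fderiv ℝ v y)) =ᶠ[nhds x] fun _ => (0 : ℝ) := by
        filter_upwards [hop.mem_nhds hx] with y hy
        rw [hΦval]
        exact hdef y hy u w
      have h3 : HasFDerivAt (fun _ : E3 => (0 : ℝ)) (Φ.comp G) x :=
        h1.congr_of_eventuallyEq h2.symm
      have h4 : Φ.comp G = 0 := h3.unique (hasFDerivAt_const 0 x)
      have h5 : Φ (G z) = 0 := ContinuousLinearMap.ext_iff.1 h4 z
      rw [hΦval] at h5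
      exact h5
    have hzero : ∀ z u, G z u = 0 := by
      intro z u
      have key : ∀ z u w, ⟪G z u, w⟫ = 0 := by
        have R1 : ∀ z u w, ⟪G z u, w⟫ + ⟪G z w, u⟫ = 0 := by
          intro z u w
          have h := hskew z u w
          have h' : ⟪u, G z w⟫ = ⟪G z w, u⟫ := real_inner_comm _ _
          linarith
        have R2 : ∀ z u w, ⟪G z u, w⟫ = ⟪G u z, w⟫ := fun z u w => by rw [hsymm z u]
        intro z u w
        have a1 := R1 z u w
        have a2 := R1 u z w
        have a3 := R1 w u z
        have b1 := R2 z u w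
        have b2 := R2 u w z
        have b3 := R2 w z u
        have b4 := R2 z w u
        have b5 := R2 u z w
        have b6 := R2 w u z
        linarith
      have := key z u (G z u)
      rwa [real_inner_self_eq_norm_sq, pow_eq_zero_iff, norm_eq_zero] at this
      norm_num
    refine ContinuousLinearMap.ext fun z => ContinuousLinearMap.ext fun u => ?_
    simpa using hzero z u
  -- hence the derivative is a constant skew map A
  obtain ⟨x₀, hx₀⟩ := hne
  have hFconst : ∀ x ∈ Ω, fderiv ℝ v x = fderiv ℝ v x₀ :=
    aux_eq_const_on hop hconn.isPreconnected hFdiff hFd0 hx₀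
  set A := fderiv ℝ v x₀ with hA
  obtain ⟨ω, hω⟩ := aux_skew_cross A (hdef x₀ hx₀)
  -- v - A is constant
  have hgdiff : ∀ x ∈ Ω, DifferentiableAt ℝ (fun y => v y - A y) x := fun x hx =>
    (hvdiff x hx).sub A.differentiableAt
  have hgd0 : ∀ x ∈ Ω, fderiv ℝ (fun y => v y - A y) x = 0 := by
    intro x hx
    rw [fderiv_fun_sub (hvdiff x hx) A.differentiableAt, A.fderiv, hFconst x hx, sub_self]
  have hgconst := aux_eq_const_on hop hconn.isPreconnected hgdiff hgd0 hx₀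
  have hrep : ∀ x ∈ Ω, v x = cross3 ω x + (v x₀ - A x₀) := by
    intro x hx
    have h := hgconst x hx
    have : v x = A x + (v x₀ - A x₀) := by rw [← h]; abel
    rwa [hω x] at this
  set b := v x₀ - A x₀ with hb
  refine ⟨⟨ω, b, hrep⟩, ?_⟩
  rintro ⟨r, hr⟩ htend
  -- extract the limit along rays
  have key : ∀ i : Fin 3, cross3 ω (EuclideanSpace.single i (1 : ℝ)) = 0 ∧ b = 0 := by
    intro i
    set e : E3 := EuclideanSpace.single i (1 : ℝ) with he
    have hnorm : ∀ t : ℝ, ‖t • e‖ = |t| := by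
      intro t
      simp [he, norm_smul, EuclideanSpace.norm_single]
    have ht : Filter.Tendsto (fun t : ℝ => t • e) Filter.atTop
        (Filter.comap (fun x : E3 => ‖x‖) Filter.atTop) := by
      rw [Filter.tendsto_comap_iff]
      have : ((fun x : E3 => ‖x‖) ∘ fun t : ℝ => t • e) = fun t : ℝ => |t| := by
        funext t; simp [Function.comp, hnorm]
      rw [this]
      exact Filter.tendsto_abs_atTop_atTop
    have hcomp : Filter.Tendsto (fun t : ℝ => v (t • e)) Filter.atTop (nhds 0) :=
      htend.comp ht
    set c : E3 := cross3 ω e with hc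
    have heq : ∀ᶠ t : ℝ in Filter.atTop, v (t • e) = t • c + b := by
      filter_upwards [Filter.eventually_gt_atTop (max r 0)] with t ht'
      have htpos : (0 : ℝ) < t := lt_of_le_of_lt (le_max_right r 0) ht'
      have hmem : (t • e) ∈ Ω := by
        apply hr
        rw [hnorm, abs_of_pos htpos]
        exact lt_of_le_of_lt (le_max_left r 0) ht'
      rw [hrep _ hmem, hc, he, aux_cross3_smul]
    have hlim : Filter.Tendsto (fun t : ℝ => t • c + b) Filter.atTop (nhds 0) :=
      hcomp.congr' heq
    have hc0 : c = 0 := by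
      have h1 : Filter.Tendsto (fun t : ℝ => t⁻¹ • (t • c + b)) Filter.atTop
          (nhds ((0 : ℝ) • (0 : E3))) :=
        tendsto_inv_atTop_zero.smul hlim
      have h2 : (fun t : ℝ => t⁻¹ • (t • c + b)) =ᶠ[Filter.atTop]
          fun t : ℝ => c + t⁻¹ • b := by
        filter_upwards [Filter.eventually_ne_atTop (0 : ℝ)] with t ht0
        rw [smul_add, smul_smul, inv_mul_cancel₀ ht0, one_smul]
      have h3 : Filter.Tendsto (fun t : ℝ => c + t⁻¹ • b) Filter.atTop
          (nhds (c + (0 : ℝ) • b)) :=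
        tendsto_const_nhds.add (tendsto_inv_atTop_zero.smul tendsto_const_nhds)
      have := tendsto_nhds_unique (h1.congr' h2) h3
      simpa using this.symm
    have hb0 : b = 0 := by
      have hconstb : Filter.Tendsto (fun _ : ℝ => b) Filter.atTop (nhds 0) := by
        refine hlim.congr fun t => ?_
        rw [hc0, smul_zero, zero_add]
      exact tendsto_nhds_unique tendsto_const_nhds hconstb
    exact ⟨hc0, hb0⟩
  have hb0 : b = 0 := (key 0).2
  have h0 := (key 0).1
  have h1 := (key 1).1
  have hω2 : ω 2 = 0 := by
    have := congrArg (fun y : E3 => y 1) h0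
    simpa [cross3, EuclideanSpace.single_apply] using this
  have hω1 : ω 1 = 0 := by
    have := congrArg (fun y : E3 => y 2) h0
    simpa [cross3, EuclideanSpace.single_apply] using this
  have hω0 : ω 0 = 0 := by
    have := congrArg (fun y : E3 => y 2) h1
    simpa [cross3, EuclideanSpace.single_apply] using this
  intro x hx
  rw [hrep x hx]
  show cross3 ω x + b = 0
  rw [hb0, add_zero]
  refine PiLp.ext fun j => ?_
  fin_cases j <;> simp [cross3, hω0, hω1, hω2]
end

section
/- For all real numbers z and z* with z* > 0 and |z − z*| < z*/2, one has | z·(log(z/z*) − 1) − ( −z* + (z − z*)²/(2z*) ) | ≤ (2/z*²)·|z − z*|³. -/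
open Real

lemma key_log_bound (t : ℝ) (ht : |t| < 1/2) :
    |(1 + t) * Real.log (1 + t) - t - t ^ 2 / 2| ≤ 2 * |t| ^ 3 := by
  have h2 : |Real.log (1 + t) - (t - t^2/2 + t^3/3)| ≤ |t|^4 / (1 - |t|) := by
    have h1 := Real.abs_log_sub_add_sum_range_le (x := -t) (by rw [abs_neg]; linarith) 3
    have e : (∑ i ∈ Finset.range 3, (-t) ^ (i+1) / (i+1)) + Real.log (1 - -t)
        = Real.log (1 + t) - (t - t^2/2 + t^3/3) := by
      rw [show (1:ℝ) - -t = 1 + t by ring]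
      simp [Finset.sum_range_succ]
      ring
    rw [e, abs_neg] at h1
    exact h1
  set R := Real.log (1 + t) - (t - t^2/2 + t^3/3) with hR
  have habs : |t| < 1 := by linarith
  have hpos : (0:ℝ) < 1 - |t| := by linarith
  have h3 : |t|^4 / (1 - |t|) ≤ 2 * |t|^4 := by
    rw [div_le_iff₀ hpos]
    nlinarith [pow_nonneg (abs_nonneg t) 4]
  have h4 : |R| ≤ 2 * |t|^4 := le_trans h2 h3
  have heq : (1 + t) * Real.log (1 + t) - t - t ^ 2 / 2
      = (1 + t) * R + (-t^3/6 + t^4/3) := by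
    rw [hR]; ring
  rw [heq]
  have h5 : |(1 + t) * R + (-t^3/6 + t^4/3)| ≤ |1 + t| * |R| + |(-t^3/6 + t^4/3)| := by
    calc _ ≤ |(1+t)*R| + |(-t^3/6 + t^4/3)| := abs_add_le _ _
      _ = _ := by rw [abs_mul]
  have h1t : |1 + t| ≤ 3/2 := by
    rw [abs_le]; constructor <;> [nlinarith [abs_lt.1 ht]; nlinarith [abs_lt.1 ht]]
  have h6 : |(-t^3/6 + t^4/3)| ≤ |t|^3/6 + |t|^4/3 := by
    calc |(-t^3/6 + t^4/3)| ≤ |(-t^3/6)| + |t^4/3| := abs_add_le _ _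
      _ = |t|^3/6 + |t|^4/3 := by
          rw [abs_div, abs_div, abs_neg, abs_pow, abs_pow]; norm_num
  have ht4 : |t|^4 ≤ |t|^3 / 2 := by
    have := abs_nonneg t
    nlinarith [pow_nonneg (abs_nonneg t) 3]
  have hRnn : |R| ≤ 2 * |t|^4 := h4
  calc |(1 + t) * R + (-t^3/6 + t^4/3)| ≤ |1 + t| * |R| + (|t|^3/6 + |t|^4/3) :=
        le_trans h5 (by linarith)
    _ ≤ (3/2) * (2 * |t|^4) + (|t|^3/6 + |t|^4/3) := by
        have : |1 + t| * |R| ≤ (3/2) * (2 * |t|^4) :=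
          mul_le_mul h1t hRnn (abs_nonneg R) (by norm_num)
        linarith
    _ ≤ 2 * |t|^3 := by nlinarith [pow_nonneg (abs_nonneg t) 3]

theorem taylor_bound_z_log (z zs : ℝ) (hzs : 0 < zs) (h : |z - zs| < zs / 2) :
    |z * (Real.log (z / zs) - 1) - (-zs + (z - zs) ^ 2 / (2 * zs))|
      ≤ 2 / zs ^ 2 * |z - zs| ^ 3 := by
  set t := (z - zs) / zs with htdef
  have hzne : zs ≠ 0 := ne_of_gt hzs
  have hz : z = zs * (1 + t) := by rw [htdef]; field_simp; ring
  have ht : |t| < 1/2 := by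
    rw [htdef, abs_div, abs_of_pos hzs, div_lt_iff₀ hzs]
    linarith
  have hlog : Real.log (z / zs) = Real.log (1 + t) := by
    rw [hz]; congr 1; field_simp
  have key := key_log_bound t ht
  have hLHS : z * (Real.log (z / zs) - 1) - (-zs + (z - zs) ^ 2 / (2 * zs))
      = zs * ((1 + t) * Real.log (1 + t) - t - t ^ 2 / 2) := by
    rw [hlog, hz]; field_simp; ring
  have hRHS : 2 / zs ^ 2 * |z - zs| ^ 3 = zs * (2 * |t| ^ 3) := by
    have : |z - zs| = zs * |t| := by
      rw [htdef, abs_div, abs_of_pos hzs]; field_simp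
    rw [this]; field_simp
  rw [hLHS, hRHS, abs_mul, abs_of_pos hzs]
  exact mul_le_mul_of_nonneg_left key (le_of_lt hzs)
end

section
/- For every integer k ≥ 1 one has Σ_{j ≥ 1, j ≠ k} j²/(k² − j²)² ≤ 3/2 + π²/2; in particular this sum is bounded uniformly in k. -/
open Real

theorem sum_sq_over_diff_sq_bounded (k : ℕ) (hk : 1 ≤ k) :
    Summable (fun j : {j : ℕ // 1 ≤ j ∧ j ≠ k} =>
      (j.1 : ℝ) ^ 2 / ((k : ℝ) ^ 2 - (j.1 : ℝ) ^ 2) ^ 2) ∧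
    ∑' j : {j : ℕ // 1 ≤ j ∧ j ≠ k},
        (j.1 : ℝ) ^ 2 / ((k : ℝ) ^ 2 - (j.1 : ℝ) ^ 2) ^ 2
      ≤ 3 / 2 + π ^ 2 / 2 := by
  -- the comparison function over ℤ
  set f : ℤ → ℝ := fun n => 1 / (n : ℝ) ^ 2 with hf
  have hfsum : Summable f := summable_one_div_int_pow.mpr one_lt_two
  -- injection
  set i : {j : ℕ // 1 ≤ j ∧ j ≠ k} → ℤ := fun j => (j.1 : ℤ) - k with hi
  have hinj : Function.Injective i := by
    intro a b hab
    simp only [hi, sub_left_inj, Int.natCast_inj] at hab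
    exact Subtype.ext hab
  -- pointwise bound
  have hbound : ∀ j : {j : ℕ // 1 ≤ j ∧ j ≠ k},
      (j.1 : ℝ) ^ 2 / ((k : ℝ) ^ 2 - (j.1 : ℝ) ^ 2) ^ 2 ≤ f (i j) := by
    rintro ⟨j, hj1, hjk⟩
    have hjk' : (j : ℝ) ≠ (k : ℝ) := by exact_mod_cast hjk
    have hne : (j : ℝ) - k ≠ 0 := sub_ne_zero.mpr hjk'
    have hd : ((j : ℝ) - k) ^ 2 > 0 := by positivity
    have hs : (0 : ℝ) < ((j : ℝ) + k) ^ 2 := by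
      have : (0 : ℝ) < (j : ℝ) + k := by
        have : (1 : ℝ) ≤ (j : ℝ) := by exact_mod_cast hj1
        have : (1 : ℝ) ≤ (k : ℝ) := by exact_mod_cast hk
        positivity
      positivity
    have key : ((k : ℝ) ^ 2 - (j : ℝ) ^ 2) ^ 2 = ((j : ℝ) - k) ^ 2 * ((j : ℝ) + k) ^ 2 := by
      ring
    have hcast : ((((j : ℕ) : ℤ) - (k : ℤ) : ℤ) : ℝ) = (j : ℝ) - k := by push_cast; ring
    simp only [hf, hi, hcast, key]
    rw [div_le_div_iff₀ (by positivity) hd]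
    have hle : (j : ℝ) ^ 2 ≤ ((j : ℝ) + k) ^ 2 := by
      have hk0 : (0 : ℝ) ≤ (k : ℝ) := by positivity
      have hj0 : (0 : ℝ) ≤ (j : ℝ) := by positivity
      nlinarith
    nlinarith [hd.le, hs.le, mul_le_mul_of_nonneg_left hle hd.le]
  have hsum : Summable (fun j : {j : ℕ // 1 ≤ j ∧ j ≠ k} =>
      (j.1 : ℝ) ^ 2 / ((k : ℝ) ^ 2 - (j.1 : ℝ) ^ 2) ^ 2) := by
    refine Summable.of_nonneg_of_le (fun j => by positivity) hbound ?_
    exact hfsum.comp_injective hinj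
  refine ⟨hsum, ?_⟩
  have hfval : ∑' n : ℤ, f n = π ^ 2 / 3 := by
    have h1 : HasSum (fun n : ℕ => (1 : ℝ) / (n : ℝ) ^ 2) (π ^ 2 / 6) := hasSum_zeta_two
    have h2 : (fun n : ℕ => f (-((n : ℤ) + 1))) = fun n : ℕ => 1 / ((n : ℝ) + 1) ^ 2 := by
      funext n; simp only [hf]; push_cast; ring_nf
    have h3 : HasSum (fun n : ℕ => (1 : ℝ) / ((n : ℝ) + 1) ^ 2) (π ^ 2 / 6) := by
      have h4 := (hasSum_nat_add_iff' (f := fun n : ℕ => (1 : ℝ) / (n : ℝ) ^ 2) 1).mpr h1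
      norm_num at h4
      convert h4 using 2
      push_cast
      exacts [rfl, one_div _]
    rw [tsum_of_nat_of_neg_add_one (by simpa [hf] using h1.summable)
      (by rw [h2]; exact h3.summable)]
    rw [show (fun n : ℕ => f n) = fun n : ℕ => (1 : ℝ) / (n : ℝ) ^ 2 from by
      funext n; simp [hf], h1.tsum_eq, h2, h3.tsum_eq]
    ring
  calc ∑' j : {j : ℕ // 1 ≤ j ∧ j ≠ k},
        (j.1 : ℝ) ^ 2 / ((k : ℝ) ^ 2 - (j.1 : ℝ) ^ 2) ^ 2
      ≤ ∑' n : ℤ, f n := by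
        refine Summable.tsum_le_tsum_of_inj i hinj (fun c _ => by positivity) hbound hsum hfsum
    _ = π ^ 2 / 3 := hfval
    _ ≤ 3 / 2 + π ^ 2 / 2 := by nlinarith [sq_nonneg π]
end

section
/- There exists a constant C > 0 such that for every sequence (c_k)_{k ≥ 1} of real numbers with Σ_{k ≥ 1} k·|c_k| < ∞, one has Σ_{j=1}^∞ ( Σ_{k ≥ 1, k ≠ j} |c_k| · 2jk/|k² − j²| )² ≤ C · ( Σ_{k=1}^∞ k·|c_k| )². -/
open Real

open scoped ENNReal

private noncomputable def mF (c : ℕ → ℝ) (j k : ℕ) : ℝ :=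
  |c k| * (2 * (j : ℝ) * (k : ℝ) / |(k : ℝ) ^ 2 - (j : ℝ) ^ 2|)

private lemma mF_nonneg (c : ℕ → ℝ) (j k : ℕ) : 0 ≤ mF c j k := by
  unfold mF; positivity

private lemma abs_cast_sub_ge {j k : ℕ} (h : k ≠ j) : (1 : ℝ) ≤ |(k : ℝ) - (j : ℝ)| := by
  have h' : (k : ℤ) - (j : ℤ) ≠ 0 := sub_ne_zero.mpr (by exact_mod_cast h)
  have h2 : (1 : ℝ) ≤ ((|(k : ℤ) - (j : ℤ)| : ℤ) : ℝ) := by exact_mod_cast Int.one_le_abs h'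
  rwa [Int.cast_abs, Int.cast_sub, Int.cast_natCast, Int.cast_natCast] at h2

private lemma abs_sq_sub (j k : ℕ) :
    |(k : ℝ) ^ 2 - (j : ℝ) ^ 2| = |(k : ℝ) - (j : ℝ)| * ((k : ℝ) + (j : ℝ)) := by
  rw [show (k : ℝ) ^ 2 - (j : ℝ) ^ 2 = ((k : ℝ) - j) * ((k : ℝ) + j) by ring, abs_mul,
    abs_of_nonneg (show (0 : ℝ) ≤ (k : ℝ) + (j : ℝ) by positivity)]

private lemma mF_le (c : ℕ → ℝ) {j k : ℕ} (hk : 1 ≤ k) (hkj : k ≠ j) :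
    mF c j k ≤ 2 * ((k : ℝ) * |c k|) := by
  have h1 : (1 : ℝ) ≤ |(k : ℝ) - j| := abs_cast_sub_ge hkj
  have hkR : (1 : ℝ) ≤ (k : ℝ) := by exact_mod_cast hk
  have hjR : (0 : ℝ) ≤ (j : ℝ) := by positivity
  have hq : 2 * (j : ℝ) * k / |(k : ℝ) ^ 2 - (j : ℝ) ^ 2| ≤ 2 * k := by
    have h2 : (k : ℝ) + j ≤ |(k : ℝ) - j| * ((k : ℝ) + j) :=
      le_mul_of_one_le_left (by positivity) h1
    rw [abs_sq_sub j k, div_le_iff₀ (by nlinarith)]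
    nlinarith [mul_le_mul_of_nonneg_left h2 (show (0 : ℝ) ≤ 2 * k by positivity),
      sq_nonneg (k : ℝ)]
  calc mF c j k ≤ |c k| * (2 * k) := mul_le_mul_of_nonneg_left hq (abs_nonneg _)
    _ = 2 * ((k : ℝ) * |c k|) := by ring

private lemma mF_le_div (c : ℕ → ℝ) {j k : ℕ} (hk : 1 ≤ k) (hkj : k ≠ j) :
    mF c j k ≤ 2 * ((k : ℝ) * |c k|) * (1 / |(k : ℝ) - (j : ℝ)|) := by
  have h1 : (1 : ℝ) ≤ |(k : ℝ) - j| := abs_cast_sub_ge hkj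
  have hkR : (1 : ℝ) ≤ (k : ℝ) := by exact_mod_cast hk
  have hjR : (0 : ℝ) ≤ (j : ℝ) := by positivity
  have hq : 2 * (j : ℝ) * k / |(k : ℝ) ^ 2 - (j : ℝ) ^ 2| ≤ 2 * k * (1 / |(k : ℝ) - j|) := by
    rw [abs_sq_sub j k, mul_one_div, div_le_div_iff₀ (by nlinarith) (by nlinarith)]
    nlinarith [mul_nonneg (mul_nonneg (show (0 : ℝ) ≤ 2 * k by positivity)
      (abs_nonneg ((k : ℝ) - j))) (show (0 : ℝ) ≤ (k : ℝ) by positivity)]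
  calc mF c j k ≤ |c k| * (2 * k * (1 / |(k : ℝ) - j|)) :=
        mul_le_mul_of_nonneg_left hq (abs_nonneg _)
    _ = 2 * ((k : ℝ) * |c k|) * (1 / |(k : ℝ) - (j : ℝ)|) := by ring

private noncomputable def mX (c : ℕ → ℝ) (j k : ℕ) : ℝ≥0∞ :=
  if 1 ≤ k ∧ k ≠ j then ENNReal.ofReal (mF c j k) else 0

private lemma mX_sq_le (c : ℕ → ℝ) (j k : ℕ) :
    mX c j k ^ 2 ≤ ENNReal.ofReal (2 * ((k : ℝ) * |c k|)) ^ 2 *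
      ENNReal.ofReal (1 / ((((j : ℤ) - (k : ℤ)) : ℤ) : ℝ) ^ 2) := by
  unfold mX
  split_ifs with h
  · obtain ⟨hk, hkj⟩ := h
    rw [← ENNReal.ofReal_pow (mF_nonneg c j k), ← ENNReal.ofReal_pow (by positivity),
      ← ENNReal.ofReal_mul (by positivity)]
    apply ENNReal.ofReal_le_ofReal
    have hcast : ((((j : ℤ) - (k : ℤ)) : ℤ) : ℝ) = (j : ℝ) - (k : ℝ) := by push_cast; ring
    have h5 := mF_le_div c hk hkj
    have h6 : mF c j k ^ 2 ≤ (2 * ((k : ℝ) * |c k|) * (1 / |(k : ℝ) - (j : ℝ)|)) ^ 2 :=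
      pow_le_pow_left₀ (mF_nonneg c j k) h5 2
    calc mF c j k ^ 2 ≤ (2 * ((k : ℝ) * |c k|) * (1 / |(k : ℝ) - (j : ℝ)|)) ^ 2 := h6
      _ = (2 * ((k : ℝ) * |c k|)) ^ 2 * (1 / ((((j : ℤ) - (k : ℤ)) : ℤ) : ℝ) ^ 2) := by
          rw [hcast, mul_pow]
          congr 1
          rw [div_pow, one_pow, sq_abs, show ((j : ℝ) - k) ^ 2 = ((k : ℝ) - j) ^ 2 by ring]
  · simp

private lemma holder_tsum (f g : ℕ → ℝ≥0∞) :
    ∑' j, f j * g j ≤ (∑' j, f j ^ 2) ^ ((1 : ℝ) / 2) * (∑' j, g j ^ 2) ^ ((1 : ℝ) / 2) := by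
  have h2 : ∀ x : ℝ≥0∞, x ^ ((2 : ℕ) : ℝ) = x ^ (2 : ℕ) := fun x => ENNReal.rpow_natCast x 2
  rw [ENNReal.tsum_eq_iSup_sum]
  refine iSup_le fun s => ?_
  have hpq : (2 : ℝ).HolderConjugate 2 := Real.HolderConjugate.two_two
  refine le_trans (ENNReal.inner_le_Lp_mul_Lq s f g hpq) ?_
  have hs : ∀ h : ℕ → ℝ≥0∞, ∑ i ∈ s, h i ^ (2 : ℝ) ≤ ∑' i, h i ^ 2 := by
    intro h
    calc ∑ i ∈ s, h i ^ (2 : ℝ) = ∑ i ∈ s, h i ^ (2 : ℕ) := by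
          refine Finset.sum_congr rfl fun i _ => ?_
          rw [← h2]; norm_num
      _ ≤ ∑' i, h i ^ 2 := ENNReal.sum_le_tsum s
  exact mul_le_mul' (ENNReal.rpow_le_rpow (hs f) (by norm_num))
    (ENNReal.rpow_le_rpow (hs g) (by norm_num))

theorem minkowski_type_double_sum_bound :
    ∃ C : ℝ, 0 < C ∧ ∀ c : ℕ → ℝ,
      Summable (fun k : ℕ => (k : ℝ) * |c k|) →
      ∑' j : {j : ℕ // 1 ≤ j},
          (∑' k : {k : ℕ // 1 ≤ k ∧ k ≠ j.1},
            |c k.1| * (2 * (j.1 : ℝ) * (k.1 : ℝ) / |(k.1 : ℝ) ^ 2 - (j.1 : ℝ) ^ 2|)) ^ 2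
        ≤ C * (∑' k : ℕ, (k : ℝ) * |c k|) ^ 2 := by
  classical
  have hBsum : Summable (fun m : ℤ => 1 / (m : ℝ) ^ 2) := by
    have := (summable_one_div_int_pow (p := 2)).mpr one_lt_two
    exact this
  set Breal : ℝ := ∑' m : ℤ, 1 / (m : ℝ) ^ 2 with hBreal
  have hB1 : (1 : ℝ) ≤ Breal := by
    have h := Summable.le_tsum hBsum 1 (fun m _ => by positivity)
    rw [hBreal]
    refine le_trans (le_of_eq ?_) h
    norm_num
  refine ⟨4 * Breal, by linarith, fun c hc => ?_⟩
  set R : ℝ := ∑' k : ℕ, (k : ℝ) * |c k| with hRdef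
  have hR0 : 0 ≤ R := tsum_nonneg fun k => by positivity
  -- BE
  have hBE : (∑' m : ℤ, ENNReal.ofReal (1 / (m : ℝ) ^ 2)) = ENNReal.ofReal Breal :=
    (ENNReal.ofReal_tsum_of_nonneg (fun m => by positivity) hBsum).symm
  -- inner summability
  have hsummand : ∀ j : ℕ, Summable (fun k : {k : ℕ // 1 ≤ k ∧ k ≠ j} => mF c j k.1) := by
    intro j
    refine Summable.of_nonneg_of_le (fun k => mF_nonneg c j k.1)
      (fun k => mF_le c k.2.1 k.2.2) ?_
    exact (hc.mul_left 2).subtype _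
  -- inner sum identification
  have hTX : ∀ j : ℕ, (∑' k : ℕ, mX c j k)
      = ENNReal.ofReal (∑' k : {k : ℕ // 1 ≤ k ∧ k ≠ j}, mF c j k.1) := by
    intro j
    rw [ENNReal.ofReal_tsum_of_nonneg (fun k => mF_nonneg c j _) (hsummand j)]
    have h7 : (∑' k : {k : ℕ // 1 ≤ k ∧ k ≠ j}, ENNReal.ofReal (mF c j k.1))
        = ∑' k : ℕ, Set.indicator {k : ℕ | 1 ≤ k ∧ k ≠ j}
            (fun k => ENNReal.ofReal (mF c j k)) k := by
      exact tsum_subtype {k : ℕ | 1 ≤ k ∧ k ≠ j} (fun k => ENNReal.ofReal (mF c j k))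
    rw [h7]
    refine tsum_congr fun k => ?_
    simp [mX, Set.indicator_apply, Set.mem_setOf_eq]
  have hfin : ∀ j : ℕ, (∑' k : ℕ, mX c j k) ≠ ⊤ := fun j => by
    rw [hTX j]; exact ENNReal.ofReal_ne_top
  -- rewrite the goal's LHS
  have hgoal : (∑' j : {j : ℕ // 1 ≤ j},
      (∑' k : {k : ℕ // 1 ≤ k ∧ k ≠ j.1},
        |c k.1| * (2 * (j.1 : ℝ) * (k.1 : ℝ) / |(k.1 : ℝ) ^ 2 - (j.1 : ℝ) ^ 2|)) ^ 2)
      = (∑' j : {j : ℕ // 1 ≤ j}, (∑' k : ℕ, mX c j.1 k) ^ 2).toReal := by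
    refine Eq.trans (tsum_congr fun j => ?_)
      (ENNReal.tsum_toReal_eq
        (f := fun j : {j : ℕ // 1 ≤ j} => (∑' k : ℕ, mX c j.1 k) ^ 2)
        (fun j => ENNReal.pow_ne_top (hfin j.1))).symm
    rw [ENNReal.toReal_pow, hTX j.1, ENNReal.toReal_ofReal (tsum_nonneg fun k => mF_nonneg c _ _)]
    rfl
  rw [hgoal]
  -- ENNReal side
  set A : ℕ → ℝ≥0∞ := fun k => ENNReal.ofReal (2 * ((k : ℝ) * |c k|)) with hA
  set sE : ℕ → ℝ≥0∞ := fun k => ∑' j : ℕ, mX c j k ^ 2 with hsE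
  have hstep4 : ∀ k : ℕ, sE k ^ ((1 : ℝ) / 2) ≤ A k * ENNReal.ofReal Breal ^ ((1 : ℝ) / 2) := by
    intro k
    have h1 : sE k ≤ A k ^ 2 * ENNReal.ofReal Breal := by
      calc sE k ≤ ∑' j : ℕ, A k ^ 2 * ENNReal.ofReal (1 / ((((j : ℤ) - (k : ℤ)) : ℤ) : ℝ) ^ 2) :=
            ENNReal.tsum_le_tsum fun j => mX_sq_le c j k
        _ = A k ^ 2 * ∑' j : ℕ, ENNReal.ofReal (1 / ((((j : ℤ) - (k : ℤ)) : ℤ) : ℝ) ^ 2) :=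
            ENNReal.tsum_mul_left
        _ ≤ A k ^ 2 * ∑' m : ℤ, ENNReal.ofReal (1 / (m : ℝ) ^ 2) := by
            refine mul_le_mul_right ?_ _
            exact ENNReal.tsum_comp_le_tsum_of_injective
              (fun a b hab => by simpa using hab : Function.Injective fun j : ℕ => (j : ℤ) - k)
              (fun m => ENNReal.ofReal (1 / (m : ℝ) ^ 2))
        _ = A k ^ 2 * ENNReal.ofReal Breal := by rw [hBE]
    calc sE k ^ ((1 : ℝ) / 2) ≤ (A k ^ 2 * ENNReal.ofReal Breal) ^ ((1 : ℝ) / 2) :=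
          ENNReal.rpow_le_rpow h1 (by norm_num)
      _ = A k * ENNReal.ofReal Breal ^ ((1 : ℝ) / 2) := by
          rw [ENNReal.mul_rpow_of_nonneg _ _ (by norm_num)]
          congr 1
          rw [← ENNReal.rpow_natCast (A k) 2, ← ENNReal.rpow_mul]
          norm_num
  -- expansion and Hölder
  have hexp : (∑' j : ℕ, (∑' k : ℕ, mX c j k) ^ 2)
      = ∑' k : ℕ, ∑' l : ℕ, ∑' j : ℕ, mX c j k * mX c j l := by
    have h1 : ∀ j : ℕ, (∑' k : ℕ, mX c j k) ^ 2 = ∑' k : ℕ, ∑' l : ℕ, mX c j k * mX c j l := by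
      intro j
      rw [sq, ← ENNReal.tsum_mul_right]
      exact tsum_congr fun k => ENNReal.tsum_mul_left.symm
    rw [tsum_congr h1, ENNReal.tsum_comm]
    exact tsum_congr fun k => ENNReal.tsum_comm
  have hAsum : (∑' k : ℕ, A k) = ENNReal.ofReal (2 * R) := by
    rw [hA, ← ENNReal.ofReal_tsum_of_nonneg (fun k => by positivity) (hc.mul_left 2)]
    congr 1
    rw [tsum_mul_left]
  have hEmain : (∑' j : ℕ, (∑' k : ℕ, mX c j k) ^ 2)
      ≤ ENNReal.ofReal (4 * Breal * R ^ 2) := by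
    rw [hexp]
    calc ∑' k : ℕ, ∑' l : ℕ, ∑' j : ℕ, mX c j k * mX c j l
        ≤ ∑' k : ℕ, ∑' l : ℕ, sE k ^ ((1 : ℝ) / 2) * sE l ^ ((1 : ℝ) / 2) :=
          ENNReal.tsum_le_tsum fun k => ENNReal.tsum_le_tsum fun l =>
            holder_tsum (fun j => mX c j k) (fun j => mX c j l)
      _ = (∑' k : ℕ, sE k ^ ((1 : ℝ) / 2)) * (∑' l : ℕ, sE l ^ ((1 : ℝ) / 2)) := by
          rw [← ENNReal.tsum_mul_right]
          exact tsum_congr fun k => ENNReal.tsum_mul_left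
      _ ≤ ((∑' k : ℕ, A k) * ENNReal.ofReal Breal ^ ((1 : ℝ) / 2)) *
            ((∑' k : ℕ, A k) * ENNReal.ofReal Breal ^ ((1 : ℝ) / 2)) := by
          have : (∑' k : ℕ, sE k ^ ((1 : ℝ) / 2))
              ≤ (∑' k : ℕ, A k) * ENNReal.ofReal Breal ^ ((1 : ℝ) / 2) := by
            rw [← ENNReal.tsum_mul_right]
            exact ENNReal.tsum_le_tsum hstep4
          exact mul_le_mul' this this
      _ = ENNReal.ofReal (4 * Breal * R ^ 2) := by
          rw [hAsum]
          have hBhalf : ENNReal.ofReal Breal ^ ((1 : ℝ) / 2) * ENNReal.ofReal Breal ^ ((1 : ℝ) / 2)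
              = ENNReal.ofReal Breal := by
            rw [← ENNReal.rpow_add_of_nonneg _ _ (by norm_num) (by norm_num)]
            norm_num
          calc ENNReal.ofReal (2 * R) * ENNReal.ofReal Breal ^ ((1 : ℝ) / 2) *
                (ENNReal.ofReal (2 * R) * ENNReal.ofReal Breal ^ ((1 : ℝ) / 2))
              = ENNReal.ofReal (2 * R) * ENNReal.ofReal (2 * R) *
                (ENNReal.ofReal Breal ^ ((1 : ℝ) / 2) * ENNReal.ofReal Breal ^ ((1 : ℝ) / 2)) := by
                ring
            _ = ENNReal.ofReal (4 * Breal * R ^ 2) := by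
                rw [hBhalf, ← ENNReal.ofReal_mul (by positivity), ← ENNReal.ofReal_mul
                  (by positivity)]
                congr 1
                ring
  have hsub : (∑' j : {j : ℕ // 1 ≤ j}, (∑' k : ℕ, mX c j.1 k) ^ 2)
      ≤ ∑' j : ℕ, (∑' k : ℕ, mX c j k) ^ 2 :=
    ENNReal.tsum_comp_le_tsum_of_injective Subtype.val_injective
      (fun j => (∑' k : ℕ, mX c j k) ^ 2)
  have hfinal := le_trans hsub hEmain
  have := ENNReal.toReal_mono ENNReal.ofReal_ne_top hfinal
  rw [ENNReal.toReal_ofReal (by positivity)] at this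
  calc (∑' j : {j : ℕ // 1 ≤ j}, (∑' k : ℕ, mX c j.1 k) ^ 2).toReal
      ≤ 4 * Breal * R ^ 2 := this
    _ = 4 * Breal * (∑' k : ℕ, (k : ℝ) * |c k|) ^ 2 := by rw [← hRdef]
end

section
/- Let B ⊂ ℝ³ be the open ball of radius R > 0 centered at the origin, let c > 0 be a constant, let ρ : ℝ³ → ℝ be twice continuously differentiable on a neighborhood of the closed ball with ρ > 0 there, and let v : ℝ³ → ℝ³ be continuously differentiable on a neighborhood of the closed ball. Assume: (i) div(ρ·v) = 0 on B; (ii) c·Δ(1/ρ) = −⟨v, ∇(log ρ)⟩ on B; (iii) ⟨v(x), x⟩ = 0 for every x with |x| = R; and (iv) ρ is constant on the sphere {|x| = R}, with value ρ_b. Then ρ(x) = ρ_b for every x in the closed ball; in particular ∇ρ ≡ 0 and div v = 0 on B. -/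
open Real MeasureTheory RealInnerProductSpace

/-- Divergence of a vector field on `ℝ³`, as the trace of its Fréchet derivative. -/
noncomputable def divg (v : EuclideanSpace ℝ (Fin 3) → EuclideanSpace ℝ (Fin 3))
    (x : EuclideanSpace ℝ (Fin 3)) : ℝ :=
  LinearMap.trace ℝ (EuclideanSpace ℝ (Fin 3)) (fderiv ℝ v x).toLinearMap

/-- Laplacian of a scalar field on `ℝ³`, as the divergence of its gradient. -/
noncomputable def lap (f : EuclideanSpace ℝ (Fin 3) → ℝ)
    (x : EuclideanSpace ℝ (Fin 3)) : ℝ :=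
  divg (gradient f) x

open Filter Topology InnerProductSpace

local notation "E3" => EuclideanSpace ℝ (Fin 3)

lemma trace_eq_sum (A : E3 →L[ℝ] E3) :
    LinearMap.trace ℝ E3 A.toLinearMap
      = ∑ i : Fin 3, A (EuclideanSpace.single i 1) i := by
  classical
  rw [LinearMap.trace_eq_matrix_trace ℝ (PiLp.basisFun 2 ℝ (Fin 3))]
  simp [Matrix.trace, LinearMap.toMatrix_apply, PiLp.basisFun_apply, PiLp.basisFun_repr]

lemma divg_eq (v : E3 → E3) (x : E3) :
    divg v x = ∑ i : Fin 3, fderiv ℝ v x (EuclideanSpace.single i 1) i :=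
  trace_eq_sum _

lemma gradient_eq_comp (f : E3 → ℝ) :
    gradient f = ⇑(toDual ℝ E3).symm ∘ fderiv ℝ f := rfl

lemma coord_eq_inner (w : E3) (i : Fin 3) : w i = ⟪w, EuclideanSpace.single i 1⟫_ℝ := by
  rw [EuclideanSpace.inner_single_right]; simp

lemma lap_eq (f : E3 → ℝ) (y : E3) :
    lap f y = ∑ i : Fin 3,
      fderiv ℝ (fderiv ℝ f) y (EuclideanSpace.single i 1) (EuclideanSpace.single i 1) := by
  rw [lap, divg_eq, gradient_eq_comp]
  refine Finset.sum_congr rfl fun i _ => ?_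
  rw [LinearIsometryEquiv.comp_fderiv]
  simp only [ContinuousLinearMap.coe_comp', Function.comp_apply]
  exact (coord_eq_inner ((toDual ℝ E3).symm ((fderiv ℝ (fderiv ℝ f) y) (EuclideanSpace.single i 1))) i).trans toDual_symm_apply

lemma second_deriv_test {g dg : ℝ → ℝ} {g'' : ℝ}
    (hmax : IsLocalMax g 0)
    (hg' : ∀ᶠ t in 𝓝 (0:ℝ), HasDerivAt g (dg t) t)
    (hg'' : HasDerivAt dg g'' 0) : g'' ≤ 0 := by
  by_contra h
  push_neg at h
  have hdg0 : dg 0 = 0 := hmax.hasDerivAt_eq_zero hg'.self_of_nhds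
  -- slope of dg tends to g'' > 0, so dg t > 0 for small t > 0
  have hslope := hasDerivAt_iff_tendsto_slope.1 hg''
  have hev : ∀ᶠ t in 𝓝[>] (0:ℝ), 0 < slope dg 0 t := by
    have : ∀ᶠ t in 𝓝[≠] (0:ℝ), 0 < slope dg 0 t :=
      hslope.eventually (eventually_gt_nhds h)
    exact nhdsWithin_mono _ (fun t (ht : 0 < t) => ne_of_gt ht) this
  have hpos : ∀ᶠ t in 𝓝[>] (0:ℝ), 0 < dg t := by
    filter_upwards [hev, self_mem_nhdsWithin] with t ht ht'
    have : slope dg 0 t = dg t / t := by simp [slope_def_field, hdg0]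
    rw [this] at ht
    exact (div_pos_iff.1 ht).resolve_right (fun ⟨_, h2⟩ => absurd ht' (not_lt.2 h2.le)) |>.1
  -- get δ > 0 where everything holds
  rw [eventually_nhdsWithin_iff] at hpos
  obtain ⟨δ₁, hδ₁, h1⟩ := Metric.eventually_nhds_iff.1 hpos
  obtain ⟨δ₂, hδ₂, h2⟩ := Metric.eventually_nhds_iff.1 hg'
  obtain ⟨δ₃, hδ₃, h3⟩ := Metric.eventually_nhds_iff.1 hmax
  set δ := min δ₁ (min δ₂ δ₃) with hδdef
  have hδ : 0 < δ := lt_min hδ₁ (lt_min hδ₂ hδ₃)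
  have hmono : StrictMonoOn g (Set.Icc 0 (δ/2)) := by
    apply strictMonoOn_of_deriv_pos (convex_Icc _ _)
    · intro t ht
      have : dist t 0 < δ₂ := by
        rw [Real.dist_eq, sub_zero, abs_of_nonneg ht.1]
        calc t ≤ δ/2 := ht.2
          _ < δ := by linarith
          _ ≤ δ₂ := le_trans (min_le_right _ _) (min_le_left _ _)
      exact ((h2 this).differentiableAt.continuousAt).continuousWithinAt
    · intro t ht
      rw [interior_Icc] at ht
      have hd1 : dist t 0 < δ₁ := by
        rw [Real.dist_eq, sub_zero, abs_of_nonneg ht.1.le]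
        calc t < δ/2 := ht.2
          _ < δ := by linarith
          _ ≤ δ₁ := min_le_left _ _
      have hd2 : dist t 0 < δ₂ := by
        rw [Real.dist_eq, sub_zero, abs_of_nonneg ht.1.le]
        calc t < δ/2 := ht.2
          _ < δ := by linarith
          _ ≤ δ₂ := le_trans (min_le_right _ _) (min_le_left _ _)
      rw [(h2 hd2).deriv]
      exact h1 hd1 ht.1
  have hlt : g 0 < g (δ/2) :=
    hmono (Set.left_mem_Icc.2 (by linarith)) (Set.right_mem_Icc.2 (by linarith)) (by linarith)
  have : g (δ/2) ≤ g 0 := by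
    apply h3
    rw [Real.dist_eq, sub_zero, abs_of_pos (by linarith : (0:ℝ) < δ/2)]
    calc δ/2 < δ := by linarith
      _ ≤ δ₃ := le_trans (min_le_right _ _) (min_le_right _ _)
  linarith

lemma dir_second_deriv_nonpos {U : Set E3} (hU : IsOpen U) {y : E3} (hy : y ∈ U) {f : E3 → ℝ}
    (hf : ContDiffOn ℝ 2 f U) (hmax : IsLocalMax f y) (e : E3) :
    fderiv ℝ (fderiv ℝ f) y e e ≤ 0 := by
  set L : ℝ → E3 := fun t => y + t • e with hL
  have hL0 : L 0 = y := by simp [hL]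
  have hLd : ∀ t : ℝ, HasDerivAt L e t := fun t => by
    have := ((hasDerivAt_id t).smul_const e).const_add y
    simp only [one_smul] at this
    exact this
  have hLc : Continuous L := by fun_prop
  have hevU : ∀ᶠ t in 𝓝 (0:ℝ), L t ∈ U := by
    have h1 : ContinuousAt L 0 := hLc.continuousAt
    have := h1.preimage_mem_nhds (hL0 ▸ hU.mem_nhds hy)
    exact this
  -- g and dg
  have hdiff : ∀ᶠ t in 𝓝 (0:ℝ), HasDerivAt (fun s => f (L s)) (fderiv ℝ f (L t) e) t := by
    filter_upwards [hevU] with t ht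
    have hfd : HasFDerivAt f (fderiv ℝ f (L t)) (L t) :=
      ((hf.contDiffAt (hU.mem_nhds ht)).differentiableAt (by norm_num)).hasFDerivAt
    exact hfd.comp_hasDerivAt t (hLd t)
  have hf' : ContDiffOn ℝ 1 (fderiv ℝ f) U := hf.fderiv_of_isOpen hU (by norm_num)
  have hfd2 : HasFDerivAt (fderiv ℝ f) (fderiv ℝ (fderiv ℝ f) y) y :=
    (((hf'.contDiffAt (hU.mem_nhds hy)).differentiableAt (by norm_num))).hasFDerivAt
  have hdg : HasDerivAt (fun t => fderiv ℝ f (L t)) (fderiv ℝ (fderiv ℝ f) y e) 0 := by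
    have hfd2' : HasFDerivAt (fderiv ℝ f) (fderiv ℝ (fderiv ℝ f) y) (L 0) := hL0 ▸ hfd2
    exact hfd2'.comp_hasDerivAt 0 (hLd 0)
  have hdg2 : HasDerivAt (fun t => fderiv ℝ f (L t) e) (fderiv ℝ (fderiv ℝ f) y e e) 0 := by
    have := hdg.clm_apply (hasDerivAt_const (0:ℝ) e)
    simpa using this
  have hgmax : IsLocalMax (fun s => f (L s)) 0 := by
    have h1 : ContinuousAt L 0 := hLc.continuousAt
    have := h1.preimage_mem_nhds (hL0 ▸ hmax)
    filter_upwards [this] with t ht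
    simpa [hL0] using ht
  exact second_deriv_test hgmax hdiff hdg2

-- gradient from a HasFDerivAt with explicit "dual vector" form
lemma gradient_of_hasFDerivAt {f : E3 → ℝ} {x : E3} {c : ℝ} {w : E3}
    (h : HasFDerivAt f (c • (toDual ℝ E3) w) x) : gradient f x = c • w := by
  rw [gradient, h.fderiv, _root_.map_smul, LinearIsometryEquiv.symm_apply_apply]

lemma toDual_single : (toDual ℝ E3) (EuclideanSpace.single 0 1)
    = (EuclideanSpace.proj (0 : Fin 3) : E3 →L[ℝ] ℝ) := by
  ext w
  simp [toDual_apply_apply, real_inner_comm, ← coord_eq_inner]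

section explemmas
variable (l : ℝ)

lemma exp_hasFDerivAt (x : E3) :
    HasFDerivAt (fun x : E3 => Real.exp (l * x 0))
      ((Real.exp (l * x 0) * l) • (EuclideanSpace.proj (0 : Fin 3) : E3 →L[ℝ] ℝ)) x := by
  have h1 : HasFDerivAt (fun x : E3 => l * x 0)
      (l • (EuclideanSpace.proj (0 : Fin 3) : E3 →L[ℝ] ℝ)) x :=
    ((EuclideanSpace.proj (0 : Fin 3) : E3 →L[ℝ] ℝ).hasFDerivAt).const_mul l
  have h2 := (Real.hasDerivAt_exp (l * x 0)).comp_hasFDerivAt x h1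
  rwa [smul_smul] at h2

lemma exp_gradient (x : E3) :
    gradient (fun x : E3 => Real.exp (l * x 0)) x
      = (Real.exp (l * x 0) * l) • EuclideanSpace.single 0 1 := by
  apply gradient_of_hasFDerivAt
  rw [toDual_single]
  exact exp_hasFDerivAt l x

lemma exp_gradient_hasFDerivAt (y : E3) :
    HasFDerivAt (gradient (fun x : E3 => Real.exp (l * x 0)))
      (((Real.exp (l * y 0) * l * l) • (EuclideanSpace.proj (0 : Fin 3) : E3 →L[ℝ] ℝ)).smulRight
        (EuclideanSpace.single 0 1)) y := by
  have h1 : HasFDerivAt (fun x : E3 => Real.exp (l * x 0) * l)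
      ((Real.exp (l * y 0) * l * l) • (EuclideanSpace.proj (0 : Fin 3) : E3 →L[ℝ] ℝ)) y := by
    have := (exp_hasFDerivAt l y).mul_const l
    rwa [smul_smul, mul_comm l] at this
  have h2 := h1.smul_const (EuclideanSpace.single (0 : Fin 3) (1:ℝ))
  have : gradient (fun x : E3 => Real.exp (l * x 0))
      = fun x => (Real.exp (l * x 0) * l) • EuclideanSpace.single 0 1 :=
    funext (exp_gradient l)
  rw [this]
  exact h2

lemma exp_lap (y : E3) :
    lap (fun x : E3 => Real.exp (l * x 0)) y = Real.exp (l * y 0) * l * l := by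
  rw [lap, divg_eq]
  rw [(exp_gradient_hasFDerivAt l y).fderiv]
  rw [Fin.sum_univ_three]
  simp [ContinuousLinearMap.smulRight_apply, EuclideanSpace.single_apply]

end explemmas

lemma lap_nonpos_of_isLocalMax {U : Set E3} (hU : IsOpen U) {y : E3} (hy : y ∈ U) {f : E3 → ℝ}
    (hf : ContDiffOn ℝ 2 f U) (hmax : IsLocalMax f y) : lap f y ≤ 0 := by
  rw [lap_eq]
  exact Finset.sum_nonpos fun i _ => dir_second_deriv_nonpos hU hy hf hmax _

lemma gradient_zero_of_isLocalMax {f : E3 → ℝ} {y : E3} (hmax : IsLocalMax f y) :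
    gradient f y = 0 := by
  rw [gradient, hmax.fderiv_eq_zero, _root_.map_zero]

lemma grad_lap_add {U : Set E3} (hU : IsOpen U) {y : E3} (hy : y ∈ U) {u : E3 → ℝ}
    (hu : ContDiffOn ℝ 2 u U) (e l : ℝ) :
    gradient (fun x => u x + e * Real.exp (l * x 0)) y
        = gradient u y + (e * (Real.exp (l * y 0) * l)) • EuclideanSpace.single 0 1 ∧
      lap (fun x => u x + e * Real.exp (l * x 0)) y
        = lap u y + e * (Real.exp (l * y 0) * l * l) := by
  set g : E3 → ℝ := fun x => Real.exp (l * x 0) with hg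
  have hgrad : ∀ x ∈ U, gradient (fun x => u x + e * g x) x
      = gradient u x + (e * (g x * l)) • EuclideanSpace.single 0 1 := by
    intro x hx
    have hud : DifferentiableAt ℝ u x :=
      (hu.contDiffAt (hU.mem_nhds hx)).differentiableAt (by norm_num)
    have hw : HasFDerivAt (fun x => u x + e * g x)
        (fderiv ℝ u x + (e * (g x * l)) • (EuclideanSpace.proj (0 : Fin 3) : E3 →L[ℝ] ℝ)) x := by
      have h2 := (exp_hasFDerivAt l x).const_mul e
      rw [smul_smul, mul_comm e] at h2
      have := hud.hasFDerivAt.add h2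
      rwa [mul_comm _ e] at this
    rw [gradient, hw.fderiv, _root_.map_add, _root_.map_smul]
    congr 1
    congr 1
    have h5 := congrArg (toDual ℝ E3).symm toDual_single
    rw [LinearIsometryEquiv.symm_apply_apply] at h5
    exact h5.symm
  have hgrad_ev : gradient (fun x => u x + e * g x)
      =ᶠ[𝓝 y] fun x => gradient u x + e • gradient g x := by
    filter_upwards [hU.mem_nhds hy] with x hx
    rw [hgrad x hx, exp_gradient, smul_smul]
  -- differentiability of gradient u at y
  have hfd : DifferentiableAt ℝ (fderiv ℝ u) y :=
    ((ContDiffOn.fderiv_of_isOpen (m := 1) hu hU (by norm_num)).contDiffAt (hU.mem_nhds hy)).differentiableAt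
      (by norm_num)
  have hGu : DifferentiableAt ℝ (gradient u) y := by
    rw [gradient_eq_comp]
    exact ((toDual ℝ E3).symm.toContinuousLinearEquiv.differentiableAt).comp y hfd
  have hGg : DifferentiableAt ℝ (gradient g) y := (exp_gradient_hasFDerivAt l y).differentiableAt
  have hfw : fderiv ℝ (gradient (fun x => u x + e * g x)) y
      = fderiv ℝ (gradient u) y + e • fderiv ℝ (gradient g) y := by
    rw [hgrad_ev.fderiv_eq, fderiv_fun_add (g := fun x => e • gradient g x) hGu (hGg.const_smul e), fderiv_fun_const_smul hGg]
  constructor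
  · exact hgrad y hy
  · rw [lap, lap, divg_eq, divg_eq, hfw]
    have : lap g y = Real.exp (l * y 0) * l * l := exp_lap l y
    rw [lap, divg_eq] at this
    rw [← this, Finset.mul_sum, ← Finset.sum_add_distrib]
    rfl

lemma coord_le_norm (x : E3) : |x 0| ≤ ‖x‖ := by
  rw [coord_eq_inner x 0]
  calc |⟪x, EuclideanSpace.single 0 1⟫_ℝ| ≤ ‖x‖ * ‖EuclideanSpace.single (0:Fin 3) (1:ℝ)‖ :=
        abs_real_inner_le_norm _ _
    _ = ‖x‖ := by rw [EuclideanSpace.norm_single]; simp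

set_option maxHeartbeats 1000000 in
lemma maxP {R c M ub : ℝ} (hR : 0 < R) (hc : 0 < c) {u : E3 → ℝ} {b : E3 → E3}
    {U : Set E3} (hU : IsOpen U) (hBU : Metric.closedBall (0:E3) R ⊆ U)
    (hu : ContDiffOn ℝ 2 u U)
    (hb : ∀ x ∈ Metric.closedBall (0:E3) R, ‖b x‖ ≤ M)
    (heq : ∀ x ∈ Metric.ball (0:E3) R, c * lap u x = ⟪b x, gradient u x⟫_ℝ)
    (hbnd : ∀ x : E3, ‖x‖ = R → u x = ub) :
    ∀ x ∈ Metric.closedBall (0:E3) R, u x ≤ ub := by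
  by_contra hcon
  push_neg at hcon
  obtain ⟨x0, hx0cb, hx0⟩ := hcon
  have hM0 : 0 ≤ M := le_trans (norm_nonneg _) (hb 0 (by simp [hR.le]))
  set l : ℝ := M / c + 1 with hldef
  have hl : 0 < l := add_pos_of_nonneg_of_pos (div_nonneg hM0 hc.le) one_pos
  have hcl : c * l = M + c := by rw [hldef]; field_simp
  set K : ℝ := Real.exp (l * R) with hKdef
  have hK : 0 < K := Real.exp_pos _
  have hexple : ∀ x ∈ Metric.closedBall (0:E3) R, Real.exp (l * x 0) ≤ K := by
    intro x hx
    apply Real.exp_le_exp.2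
    have h1 : |x 0| ≤ ‖x‖ := coord_le_norm x
    have h2 : ‖x‖ ≤ R := by simpa [Metric.mem_closedBall, dist_zero_right] using hx
    have : x 0 ≤ R := le_trans (le_abs_self _) (le_trans h1 h2)
    nlinarith
  set ε : ℝ := (u x0 - ub) / (2 * K) with hεdef
  have hε : 0 < ε := by
    apply div_pos (by linarith) (by linarith)
  set w : E3 → ℝ := fun x => u x + ε * Real.exp (l * x 0) with hwdef
  have hgC : ContDiff ℝ 2 (fun x : E3 => Real.exp (l * x 0)) := by
    apply Real.contDiff_exp.comp
    exact contDiff_const.mul ((EuclideanSpace.proj (0:Fin 3) : E3 →L[ℝ] ℝ).contDiff)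
  have hw2 : ContDiffOn ℝ 2 w U := hu.add ((hgC.const_smul ε).contDiffOn.congr (by
    intro x hx; simp [smul_eq_mul]))
  have hwcont : ContinuousOn w (Metric.closedBall (0:E3) R) :=
    (hw2.continuousOn).mono hBU
  obtain ⟨y, hycb, hymax⟩ := (isCompact_closedBall (0:E3) R).exists_isMaxOn
    ⟨0, by simp [hR.le]⟩ hwcont
  have hwx0y : w x0 ≤ w y := hymax hx0cb
  have hux0wy : u x0 < w y := by
    have : 0 < ε * Real.exp (l * x0 0) := by positivity
    have : u x0 < w x0 := by simp only [hwdef]; linarith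
    linarith
  have hyball : y ∈ Metric.ball (0:E3) R := by
    rw [Metric.mem_ball, dist_zero_right]
    rcases lt_or_eq_of_le (by simpa [Metric.mem_closedBall, dist_zero_right] using hycb) with h | h
    · exact h
    · exfalso
      have hwy : w y = ub + ε * Real.exp (l * y 0) := by
        simp only [hwdef, hbnd y h]
      have h2 : ε * Real.exp (l * y 0) ≤ ε * K := by
        have := hexple y hycb
        nlinarith
      have h3 : ε * K = (u x0 - ub) / 2 := by
        rw [hεdef]; field_simp
      rw [hwy] at hux0wy
      nlinarith
  have hyU : y ∈ U := hBU (Metric.ball_subset_closedBall hyball)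
  have hlocmax : IsLocalMax w y := by
    filter_upwards [Metric.isOpen_ball.mem_nhds hyball] with z hz
    exact hymax (Metric.ball_subset_closedBall hz)
  have hgradw : gradient w y = 0 := gradient_zero_of_isLocalMax hlocmax
  have hlapw : lap w y ≤ 0 := lap_nonpos_of_isLocalMax hU hyU hw2 hlocmax
  obtain ⟨hga, hla⟩ := grad_lap_add hU hyU hu ε l
  set Ey : ℝ := Real.exp (l * y 0) with hEy
  have hEypos : 0 < Ey := Real.exp_pos _
  have hgradu : gradient u y = -(ε * (Ey * l)) • EuclideanSpace.single 0 1 := by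
    have : gradient u y + (ε * (Ey * l)) • EuclideanSpace.single 0 1 = 0 := by
      rw [← hga]; exact hgradw
    rw [neg_smul, eq_neg_iff_add_eq_zero]
    exact this
  have hlapu : lap u y ≤ -(ε * (Ey * l * l)) := by
    have : lap u y + ε * (Ey * l * l) ≤ 0 := by rw [← hla]; exact hlapw
    linarith
  have hinner : ⟪b y, EuclideanSpace.single (0:Fin 3) (1:ℝ)⟫_ℝ ≤ M := by
    calc ⟪b y, EuclideanSpace.single (0:Fin 3) (1:ℝ)⟫_ℝ
        ≤ |⟪b y, EuclideanSpace.single (0:Fin 3) (1:ℝ)⟫_ℝ| := le_abs_self _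
      _ ≤ ‖b y‖ * ‖EuclideanSpace.single (0:Fin 3) (1:ℝ)‖ := abs_real_inner_le_norm _ _
      _ = ‖b y‖ := by rw [EuclideanSpace.norm_single]; simp
      _ ≤ M := hb y hycb
  have heqy := heq y hyball
  rw [hgradu, real_inner_smul_right] at heqy
  -- heqy : c * lap u y = -(ε * (Ey * l)) * ⟪b y, e0⟫
  have h1 : c * lap u y ≥ -(ε * (Ey * l)) * M := by
    rw [heqy]
    have hp : 0 < ε * (Ey * l) := by positivity
    nlinarith
  have h2 : c * lap u y ≤ -(c * (ε * (Ey * l * l))) := by nlinarith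
  have hp : 0 < ε * Ey * l := by positivity
  nlinarith [mul_pos (mul_pos hε hEypos) hl]

lemma gradient_neg (f : E3 → ℝ) (x : E3) : gradient (fun y => -f y) x = -gradient f x := by
  rw [gradient, gradient, fderiv_fun_neg, _root_.map_neg]

lemma divg_neg (G : E3 → E3) (x : E3) : divg (fun y => -G y) x = -divg G x := by
  rw [divg_eq, divg_eq, ← Finset.sum_neg_distrib]
  refine Finset.sum_congr rfl fun i _ => ?_
  rw [fderiv_fun_neg]
  simp

lemma lap_neg (f : E3 → ℝ) (x : E3) : lap (fun y => -f y) x = -lap f x := by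
  rw [lap, lap, ← divg_neg]
  congr 1
  funext z
  exact gradient_neg f z

theorem equilibrium_gas_density_constant (R c ρb : ℝ) (hR : 0 < R) (hc : 0 < c)
    (ρ : EuclideanSpace ℝ (Fin 3) → ℝ)
    (v : EuclideanSpace ℝ (Fin 3) → EuclideanSpace ℝ (Fin 3))
    (U : Set (EuclideanSpace ℝ (Fin 3))) (hU : IsOpen U)
    (hBU : Metric.closedBall (0 : EuclideanSpace ℝ (Fin 3)) R ⊆ U)
    (hρ : ContDiffOn ℝ 2 ρ U) (hρpos : ∀ x ∈ U, 0 < ρ x)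
    (hv : ContDiffOn ℝ 1 v U)
    (h1 : ∀ x ∈ Metric.ball (0 : EuclideanSpace ℝ (Fin 3)) R,
      divg (fun y => ρ y • v y) x = 0)
    (h2 : ∀ x ∈ Metric.ball (0 : EuclideanSpace ℝ (Fin 3)) R,
      c * lap (fun y => (ρ y)⁻¹) x = -⟪v x, gradient (fun y => Real.log (ρ y)) x⟫)
    (h3 : ∀ x : EuclideanSpace ℝ (Fin 3), ‖x‖ = R → ⟪v x, x⟫ = 0)
    (h4 : ∀ x : EuclideanSpace ℝ (Fin 3), ‖x‖ = R → ρ x = ρb) :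
    (∀ x ∈ Metric.closedBall (0 : EuclideanSpace ℝ (Fin 3)) R, ρ x = ρb) ∧
    (∀ x ∈ Metric.ball (0 : EuclideanSpace ℝ (Fin 3)) R, gradient ρ x = 0) ∧
    (∀ x ∈ Metric.ball (0 : EuclideanSpace ℝ (Fin 3)) R, divg v x = 0) := by
  have hρne : ∀ x ∈ U, ρ x ≠ 0 := fun x hx => (hρpos x hx).ne'
  set u : E3 → ℝ := fun x => (ρ x)⁻¹ with hudef
  set b : E3 → E3 := fun x => ρ x • v x with hbdef
  have hu : ContDiffOn ℝ 2 u U := hρ.inv hρne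
  obtain ⟨M, hM⟩ := (isCompact_closedBall (0:E3) R).exists_bound_of_continuousOn
    ((hρ.continuousOn.smul hv.continuousOn).mono hBU)
  have hgradu : ∀ x ∈ U, gradient u x = (-((ρ x)^2)⁻¹) • gradient ρ x := by
    intro x hx
    have hdρ : DifferentiableAt ℝ ρ x :=
      (hρ.contDiffAt (hU.mem_nhds hx)).differentiableAt (by norm_num)
    have finv : HasFDerivAt u ((-((ρ x)^2)⁻¹) • fderiv ℝ ρ x) x := by
      have := (hasDerivAt_inv (hρne x hx)).comp_hasFDerivAt x hdρ.hasFDerivAt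
      exact this
    rw [gradient, finv.fderiv, _root_.map_smul]
    rfl
  have hgradlog : ∀ x ∈ U, gradient (fun y => Real.log (ρ y)) x
      = (ρ x)⁻¹ • gradient ρ x := by
    intro x hx
    have hdρ : DifferentiableAt ℝ ρ x :=
      (hρ.contDiffAt (hU.mem_nhds hx)).differentiableAt (by norm_num)
    have flog : HasFDerivAt (fun y => Real.log (ρ y)) ((ρ x)⁻¹ • fderiv ℝ ρ x) x := by
      have := (Real.hasDerivAt_log (hρne x hx)).comp_hasFDerivAt x hdρ.hasFDerivAt
      exact this
    rw [gradient, flog.fderiv, _root_.map_smul]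
    rfl
  have heq : ∀ x ∈ Metric.ball (0:E3) R, c * lap u x = ⟪b x, gradient u x⟫_ℝ := by
    intro x hx
    have hxU : x ∈ U := hBU (Metric.ball_subset_closedBall hx)
    have h2x := h2 x hx
    rw [hgradlog x hxU, real_inner_smul_right] at h2x
    rw [hgradu x hxU, real_inner_smul_right, hbdef]
    simp only
    rw [real_inner_smul_left]
    rw [h2x]
    have hne := hρne x hxU
    field_simp
  have hub : ∀ x : E3, ‖x‖ = R → u x = (ρb)⁻¹ := by
    intro x hx; simp only [hudef, h4 x hx]
  have hle : ∀ x ∈ Metric.closedBall (0:E3) R, u x ≤ (ρb)⁻¹ :=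
    maxP hR hc hU hBU hu hM heq hub
  have hge : ∀ x ∈ Metric.closedBall (0:E3) R, -u x ≤ -(ρb)⁻¹ := by
    apply maxP hR hc hU hBU hu.neg hM
    · intro x hx
      have h5 : lap (fun y => -u y) x = -lap u x := lap_neg u x
      have h6 : gradient (fun y => -u y) x = -gradient u x := gradient_neg u x
      rw [h5, h6, inner_neg_right]
      have := heq x hx
      linarith [show ⟪b x, gradient u x⟫_ℝ = ⟪(ρ • v) x, gradient u x⟫_ℝ from rfl]
    · intro x hx
      rw [hub x hx]
  have hρconst : ∀ x ∈ Metric.closedBall (0:E3) R, ρ x = ρb := by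
    intro x hx
    have h5 : u x = (ρb)⁻¹ := le_antisymm (hle x hx) (by linarith [hge x hx])
    have : (ρ x)⁻¹ = (ρb)⁻¹ := h5
    exact inv_inj.1 this
  refine ⟨hρconst, ?_, ?_⟩
  · intro x hx
    have hev : ρ =ᶠ[𝓝 x] fun _ => ρb := by
      filter_upwards [Metric.isOpen_ball.mem_nhds hx] with z hz
      exact hρconst z (Metric.ball_subset_closedBall hz)
    rw [gradient, hev.fderiv_eq, fderiv_fun_const]
    simp
  · intro x hx
    have hxU : x ∈ U := hBU (Metric.ball_subset_closedBall hx)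
    have hρb : ρb ≠ 0 := by
      rw [← hρconst x (Metric.ball_subset_closedBall hx)]
      exact hρne x hxU
    have hdv : DifferentiableAt ℝ v x :=
      (hv.contDiffAt (hU.mem_nhds hxU)).differentiableAt (by norm_num)
    have hev : (fun y => ρ y • v y) =ᶠ[𝓝 x] fun y => ρb • v y := by
      filter_upwards [Metric.isOpen_ball.mem_nhds hx] with z hz
      rw [hρconst z (Metric.ball_subset_closedBall hz)]
    have h1x := h1 x hx
    rw [divg_eq] at h1x
    rw [hev.fderiv_eq, fderiv_fun_const_smul hdv] at h1x
    rw [divg_eq]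
    have : ∑ i : Fin 3, (ρb • fderiv ℝ v x) (EuclideanSpace.single i 1) i
        = ρb * ∑ i : Fin 3, fderiv ℝ v x (EuclideanSpace.single i 1) i := by
      rw [Finset.mul_sum]
      refine Finset.sum_congr rfl fun i _ => ?_
      simp
    rw [this] at h1x
    exact (mul_eq_zero.1 h1x).resolve_left hρb
end
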